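/- arXiv:2505.16529 — 6 statements merged into one kernel-verified Lean document; each statement's English description precedes it below -/
import Mathlib

section
/- Key number-theoretic step in the proof of Proposition 4.2. Let ℓ be an odd prime and let δ be a squarefree integer with δ ≠ 0 and δ ≠ 1. Suppose there exists N such that for every prime p > N with p ≠ ℓ and p not dividing δ, the implication holds: if δ is a nonzero quadratic residue modulo p (legendreSym p δ = 1), then p is a quadratic residue modulo ℓ (legendreSym ℓ p = 1). Then δ = ℓ if ℓ ≡ 1 (mod 4), and δ = −ℓ if ℓ ≡ 3 (mod 4); that is, ℚ(√δ) is the quadratic field contained in the ℓ-th cyclotomic field ℚ(ζ_ℓ). -/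
private lemma coprime_of_modEq' {a b n : ℕ} (h : a ≡ b [MOD n]) (hb : b.Coprime n) :
    a.Coprime n := by
  have : Nat.gcd a n = Nat.gcd b n := by
    rcases Nat.eq_zero_or_pos n with rfl | hn
    · simpa [Nat.ModEq] using h
    · rw [Nat.gcd_comm a n, Nat.gcd_comm b n, Nat.gcd_rec n a, Nat.gcd_rec n b, h]
  rwa [Nat.Coprime, this]

private lemma exists_nonres (q : ℕ) [Fact q.Prime] (hq : q ≠ 2) :
    ∃ u : ℕ, 0 < u ∧ u < q ∧ ∀ p : ℕ, p ≡ u [MOD q] → legendreSym q p = -1 := by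
  have hchar : ringChar (ZMod q) ≠ 2 := by
    rw [ZMod.ringChar_zmod_n]; exact hq
  obtain ⟨b, hb⟩ := quadraticChar_exists_neg_one hchar
  have hb0 : b ≠ 0 := by
    intro h; rw [h] at hb; simp at hb
  haveI : NeZero q := ⟨(Fact.out : q.Prime).ne_zero⟩
  refine ⟨b.val, Nat.pos_of_ne_zero (by simpa [ZMod.val_eq_zero] using hb0), b.val_lt, ?_⟩
  intro p hp
  rw [legendreSym.eq_neg_one_iff']
  have : (p : ZMod q) = b := by
    rw [(ZMod.natCast_eq_natCast_iff _ _ _).mpr hp, ZMod.natCast_rightInverse b]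
  rw [this]
  exact quadraticChar_neg_one_iff_not_isSquare.mp hb

/-- Key: for squarefree `t ≠ 1` there is a residue class coprime to `4|t|` on which
the Jacobi symbol `J(t|·)` equals `-1`. -/
private lemma exists_jacobi_neg_one {t : ℤ} (hsf : Squarefree t) (h1 : t ≠ 1) :
    ∃ a : ℕ, a.Coprime (4 * t.natAbs) ∧ jacobiSym t a = -1 := by
  have ht0 : t ≠ 0 := hsf.ne_zero
  by_cases hq : ∃ q : ℕ, q.Prime ∧ q ≠ 2 ∧ (q : ℤ) ∣ t
  · -- main case: t has an odd prime factor q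
    obtain ⟨q, hqp, hq2, hqd⟩ := hq
    haveI : Fact q.Prime := ⟨hqp⟩
    obtain ⟨r, htqr⟩ := hqd
    have hq1 : 2 ≤ q := hqp.two_le
    have hr0 : r ≠ 0 := by rintro rfl; simp [htqr] at ht0
    have hqr : ¬ (q : ℤ) ∣ r := by
      intro h
      have h4 : (q : ℤ) * q ∣ t := htqr ▸ mul_dvd_mul_left _ h
      have := hsf q h4
      rw [Int.isUnit_iff] at this
      omega
    -- the CRT moduli are coprime
    have hcop : Nat.Coprime q (4 * r.natAbs) := by
      rw [Nat.Prime.coprime_iff_not_dvd hqp]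
      intro hd
      rcases (Nat.Prime.dvd_mul hqp).mp hd with h | h
      · exact hq2 ((Nat.prime_dvd_prime_iff_eq hqp Nat.prime_two).mp
          (hqp.dvd_of_dvd_pow (show q ∣ 2 ^ 2 by norm_num [h])))
      · refine hqr (Int.natAbs_dvd_natAbs.mp ?_)
        simpa using h
    -- a nonresidue mod q
    obtain ⟨u, hu0, huq, hu⟩ := exists_nonres q hq2
    -- CRT
    obtain ⟨k, hk1, hk2⟩ := Nat.chineseRemainder hcop u 1
    have hm1 : 1 < 4 * r.natAbs := by
      have : r.natAbs ≠ 0 := fun h => hr0 (Int.natAbs_eq_zero.mp h)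
      omega
    have hk4 : k % 4 = 1 := by
      have h4 : k ≡ 1 [MOD 4] := hk2.of_dvd ⟨r.natAbs, rfl⟩
      simpa [Nat.ModEq] using h4
    have hkodd : Odd k := by rw [Nat.odd_iff]; omega
    have hkr : k.Coprime (4 * r.natAbs) := coprime_of_modEq' hk2 (Nat.coprime_one_left _)
    have hkq : k.Coprime q := coprime_of_modEq' hk1
      (Nat.coprime_comm.mp ((Nat.Prime.coprime_iff_not_dvd hqp).mpr
        (Nat.not_dvd_of_pos_of_lt hu0 huq)))
    refine ⟨k, ?_, ?_⟩
    · -- coprimality to 4|t|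
      have : 4 * t.natAbs = q * (4 * r.natAbs) := by
        rw [htqr, Int.natAbs_mul, Int.natAbs_natCast]; ring
      rw [this]
      exact Nat.Coprime.mul_right hkq hkr
    · -- the Jacobi symbol value
      rw [htqr, jacobiSym.mul_left]
      have hJr : jacobiSym r k = 1 := by
        rw [jacobiSym.mod_right r hkodd]
        have : k % (4 * r.natAbs) = 1 := by
          simpa [Nat.ModEq, Nat.mod_eq_of_lt hm1] using hk2
        rw [this, jacobiSym.one_right]
      have hJq : jacobiSym (q : ℤ) k = -1 := by
        rw [jacobiSym.quadratic_reciprocity_one_mod_four' (hqp.odd_of_ne_two hq2) hk4,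
          ← jacobiSym.legendreSym.to_jacobiSym]
        exact hu k hk1
      rw [hJq, hJr, mul_one]
  · -- t ∈ {-1, 2, -2}
    push_neg at hq
    have hn : t.natAbs = 1 ∨ t.natAbs = 2 := by
      have hsfn : Squarefree t.natAbs := Int.squarefree_natAbs.mpr hsf
      have hsub : t.natAbs.primeFactors ⊆ {2} := by
        intro p hp
        rw [Nat.mem_primeFactors] at hp
        obtain ⟨pp, pd, -⟩ := hp
        rw [Finset.mem_singleton]
        by_contra hp2
        exact hq p pp hp2 ((Int.natCast_dvd_natCast.mpr pd).trans (Int.natAbs_dvd.mpr dvd_rfl))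
      have := Nat.prod_primeFactors_of_squarefree hsfn
      rcases Finset.subset_singleton_iff.mp hsub with h | h <;> rw [h] at this <;>
        simp at this <;> omega
    have h2 : t = -1 ∨ t = 2 ∨ t = -2 := by
      rcases Int.natAbs_eq t with h | h <;> rcases hn with h' | h' <;> rw [h'] at h <;> omega
    rcases h2 with rfl | rfl | rfl
    · exact ⟨3, by norm_num, by
        rw [jacobiSym.at_neg_one (by decide : Odd 3), ZMod.χ₄_nat_three_mod_four (by norm_num)]⟩
    · exact ⟨3, by norm_num, by
        rw [jacobiSym.at_two (by decide : Odd 3), ZMod.χ₈_nat_mod_eight]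
        decide⟩
    · refine ⟨5, by norm_num, ?_⟩
      rw [show (-2 : ℤ) = -1 * 2 by norm_num, jacobiSym.mul_left,
        jacobiSym.at_neg_one (by decide : Odd 5), jacobiSym.at_two (by decide : Odd 5),
        ZMod.χ₄_nat_one_mod_four (by norm_num), ZMod.χ₈_nat_mod_eight]
      decide

/-- Reciprocity for `ℓ* = ±ℓ`: `J(ℓ* | p) = (p/ℓ)` for odd primes `p`. -/
private lemma recip_star (ℓ : ℕ) [Fact ℓ.Prime] (hodd : ℓ ≠ 2) (p : ℕ) [Fact p.Prime]
    (hp2 : p ≠ 2) :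
    jacobiSym ((if ℓ % 4 = 1 then (1 : ℤ) else -1) * ℓ) p = legendreSym ℓ p := by
  have hlo : Odd ℓ := (Fact.out : ℓ.Prime).odd_of_ne_two hodd
  have hpo : Odd p := (Fact.out : p.Prime).odd_of_ne_two hp2
  have hl4 : ℓ % 4 = 1 ∨ ℓ % 4 = 3 := Nat.odd_mod_four_iff.mp (Nat.odd_iff.mp hlo)
  have hp4 : p % 4 = 1 ∨ p % 4 = 3 := Nat.odd_mod_four_iff.mp (Nat.odd_iff.mp hpo)
  rw [jacobiSym.legendreSym.to_jacobiSym]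
  rcases hl4 with h | h
  · rw [if_pos h, one_mul]
    exact jacobiSym.quadratic_reciprocity_one_mod_four h hpo
  · rw [if_neg (by omega), jacobiSym.mul_left, jacobiSym.at_neg_one hpo]
    rcases hp4 with h' | h'
    · rw [ZMod.χ₄_nat_one_mod_four h', one_mul,
        jacobiSym.quadratic_reciprocity_one_mod_four' hlo h']
    · rw [ZMod.χ₄_nat_three_mod_four h',
        jacobiSym.quadratic_reciprocity_three_mod_four h h']
      ring

/-- Dirichlet packaged: a large prime in the residue class `k` mod `M`. -/
private lemma find_prime (M : ℕ) (h4 : 4 ∣ M) (hM0 : M ≠ 0) (k : ℕ) (hk : k.Coprime M)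
    (N : ℕ) :
    ∃ p : ℕ, p.Prime ∧ N < p ∧ p ≡ k [MOD M] ∧ p.Coprime M ∧ Odd p := by
  haveI : NeZero M := ⟨hM0⟩
  have hunit : IsUnit (k : ZMod M) := (ZMod.isUnit_iff_coprime k M).mpr hk
  obtain ⟨p, hpN, hpp, hpk⟩ := Nat.forall_exists_prime_gt_and_eq_mod hunit N
  have hmod : p ≡ k [MOD M] := (ZMod.natCast_eq_natCast_iff _ _ _).mp hpk
  have hpc : p.Coprime M := coprime_of_modEq' hmod hk
  have hpodd : Odd p := by
    rw [Nat.odd_iff]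
    by_contra h
    have h2p : 2 ∣ p := by omega
    have h2M : 2 ∣ M := dvd_trans (by norm_num) h4
    have := Nat.le_of_dvd (by omega) (Nat.dvd_gcd h2p h2M)
    rw [hpc] at this
    omega
  exact ⟨p, hpp, hpN, hmod, hpc, hpodd⟩

/-- **Key number-theoretic step in the proof of Proposition 4.2**: if `δ` is squarefree,
`δ ≠ 0, 1`, and for all sufficiently large primes `p ≠ ℓ` with `p ∤ δ` the implication
`(δ/p) = 1 → (p/ℓ) = 1` holds, then `δ = ℓ*`, i.e. `ℚ(√δ)` is the quadratic field inside
`ℚ(ζ_ℓ)`. -/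
theorem quadratic_field_in_cyclotomic
    (ℓ : ℕ) [Fact ℓ.Prime] (hodd : ℓ ≠ 2)
    (δ : ℤ) (hsf : Squarefree δ) (h0 : δ ≠ 0) (h1 : δ ≠ 1)
    (hmain : ∃ N : ℕ, ∀ (p : ℕ) [Fact p.Prime], N < p → p ≠ ℓ → ¬ ((p : ℤ) ∣ δ) →
      legendreSym p δ = 1 → legendreSym ℓ p = 1) :
    (ℓ % 4 = 1 → δ = ℓ) ∧ (ℓ % 4 = 3 → δ = -ℓ) := by
  obtain ⟨N, hN⟩ := hmain
  have hlp : ℓ.Prime := Fact.out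
  have hl2 : 2 ≤ ℓ := hlp.two_le
  obtain ⟨u, hu0, huq, hu⟩ := exists_nonres ℓ hodd
  have hucop : u.Coprime ℓ :=
    Nat.coprime_comm.mp ((hlp.coprime_iff_not_dvd).mpr (Nat.not_dvd_of_pos_of_lt hu0 huq))
  set s : ℤ := if ℓ % 4 = 1 then 1 else -1 with hs
  have hss : s * s = 1 := by rw [hs]; split_ifs <;> norm_num
  -- Step 1 : ℓ ∣ δ
  have hld : (ℓ : ℤ) ∣ δ := by
    by_contra hnd
    have hdn0 : δ.natAbs ≠ 0 := fun h => h0 (Int.natAbs_eq_zero.mp h)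
    have hcop : (4 * δ.natAbs).Coprime ℓ := by
      have hndvd : ¬ ℓ ∣ 4 * δ.natAbs := by
        intro h
        rcases (Nat.Prime.dvd_mul hlp).mp h with h | h
        · exact hodd ((Nat.prime_dvd_prime_iff_eq hlp Nat.prime_two).mp
            (hlp.dvd_of_dvd_pow (show ℓ ∣ 2 ^ 2 by norm_num [h])))
        · exact hnd ((Int.natCast_dvd_natCast.mpr h).trans (Int.natAbs_dvd.mpr dvd_rfl))
      exact ((hlp.coprime_iff_not_dvd).mpr hndvd).symm
    obtain ⟨k, hk1, hk2⟩ := Nat.chineseRemainder hcop 1 u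
    have hkM : k.Coprime (4 * δ.natAbs * ℓ) :=
      (coprime_of_modEq' hk1 (Nat.coprime_one_left _)).mul_right (coprime_of_modEq' hk2 hucop)
    obtain ⟨p, hpp, hpN, hpmod, hpc, hpodd⟩ := find_prime (4 * δ.natAbs * ℓ)
      ⟨δ.natAbs * ℓ, by ring⟩ (by positivity) k hkM N
    haveI : Fact p.Prime := ⟨hpp⟩
    have hp1 : p ≡ 1 [MOD 4 * δ.natAbs] := (hpmod.of_dvd ⟨ℓ, rfl⟩).trans hk1
    have hpu : p ≡ u [MOD ℓ] := (hpmod.of_dvd ⟨4 * δ.natAbs, mul_comm _ _⟩).trans hk2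
    have hple : legendreSym ℓ p = -1 := hu p hpu
    have hpl : p ≠ ℓ := by
      rintro rfl
      have := hpc.eq_one_of_dvd ⟨4 * δ.natAbs, mul_comm _ _⟩
      omega
    have hpd : ¬ (p : ℤ) ∣ δ := by
      intro h
      have h' : p ∣ δ.natAbs := by
        have := Int.natAbs_dvd_natAbs.mpr h
        simpa using this
      have : p ∣ 4 * δ.natAbs * ℓ := Dvd.dvd.mul_right (Dvd.dvd.mul_left h' 4) ℓ
      have := hpc.eq_one_of_dvd this
      have := hpp.two_le
      omega
    have hps : legendreSym p δ = 1 := by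
      rw [jacobiSym.legendreSym.to_jacobiSym, jacobiSym.mod_right δ hpodd]
      have hmd : p % (4 * δ.natAbs) = 1 := by
        have hlt : 1 < 4 * δ.natAbs := by omega
        simpa [Nat.ModEq, Nat.mod_eq_of_lt hlt] using hp1
      rw [hmd, jacobiSym.one_right]
    have := hN p hpN hpl hpd hps
    omega
  -- Step 2 : δ = s * ℓ
  obtain ⟨δ', hδ'⟩ := hld
  have hd'sf : Squarefree δ' := hsf.squarefree_of_dvd ⟨ℓ, by rw [hδ']; ring⟩
  have hs12 : s = 1 ∨ s = -1 := by rw [hs]; split_ifs <;> simp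
  have hδs : δ = s * ℓ := by
    by_contra hne
    set t : ℤ := s * δ' with ht
    have hd's : δ' = s * t := by rw [ht]; rw [show s * (s * δ') = (s * s) * δ' by ring, hss, one_mul]
    have hnat : t.natAbs = δ'.natAbs := by
      rcases hs12 with h | h <;> rw [ht, h] <;> simp [Int.natAbs_mul]
    have hst : δ = (s * ℓ) * t := by
      rw [hδ', show (s * ℓ) * t = (s * t) * ℓ by ring, ← hd's]; ring
    have htsf : Squarefree t := by
      rw [← Int.squarefree_natAbs, hnat, Int.squarefree_natAbs]; exact hd'sf
    have ht1 : t ≠ 1 := by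
      intro h
      apply hne
      rw [hδ', show δ' = s * t from hd's, h, mul_one]; ring
    obtain ⟨a₁, ha₁c, ha₁j⟩ := exists_jacobi_neg_one htsf ht1
    have htn0 : t.natAbs ≠ 0 := fun h => htsf.ne_zero (Int.natAbs_eq_zero.mp h)
    have hcop : (4 * t.natAbs).Coprime ℓ := by
      have hndvd : ¬ ℓ ∣ 4 * t.natAbs := by
        intro h
        rcases (Nat.Prime.dvd_mul hlp).mp h with h | h
        · exact hodd ((Nat.prime_dvd_prime_iff_eq hlp Nat.prime_two).mp
            (hlp.dvd_of_dvd_pow (show ℓ ∣ 2 ^ 2 by norm_num [h])))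
        · have hld' : (ℓ : ℤ) ∣ δ' := by
            have h1' : (ℓ : ℤ) ∣ t := (Int.natCast_dvd_natCast.mpr h).trans
              (Int.natAbs_dvd.mpr dvd_rfl)
            rw [hd's]; exact Dvd.dvd.mul_left h1' s
          have hdd : (ℓ : ℤ) * ℓ ∣ δ := by rw [hδ']; exact mul_dvd_mul_left _ hld'
          have := hsf ℓ hdd
          rw [Int.isUnit_iff] at this
          omega
      exact ((hlp.coprime_iff_not_dvd).mpr hndvd).symm
    obtain ⟨k, hk1, hk2⟩ := Nat.chineseRemainder hcop a₁ u
    have hkM : k.Coprime (4 * t.natAbs * ℓ) :=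
      (coprime_of_modEq' hk1 ha₁c).mul_right (coprime_of_modEq' hk2 hucop)
    obtain ⟨p, hpp, hpN, hpmod, hpc, hpodd⟩ := find_prime (4 * t.natAbs * ℓ)
      ⟨t.natAbs * ℓ, by ring⟩ (by positivity) k hkM N
    haveI : Fact p.Prime := ⟨hpp⟩
    have hp1 : p ≡ a₁ [MOD 4 * t.natAbs] := (hpmod.of_dvd ⟨ℓ, rfl⟩).trans hk1
    have hpu : p ≡ u [MOD ℓ] := (hpmod.of_dvd ⟨4 * t.natAbs, mul_comm _ _⟩).trans hk2
    have hple : legendreSym ℓ p = -1 := hu p hpu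
    have hpl : p ≠ ℓ := by
      rintro rfl
      have := hpc.eq_one_of_dvd ⟨4 * t.natAbs, mul_comm _ _⟩
      omega
    have hp2 : p ≠ 2 := by
      intro h
      rw [Nat.odd_iff] at hpodd
      omega
    have hpd : ¬ (p : ℤ) ∣ δ := by
      intro h
      have h' : p ∣ δ.natAbs := by
        have := Int.natAbs_dvd_natAbs.mpr h
        simpa using this
      rw [hδ', Int.natAbs_mul, Int.natAbs_natCast, ← hnat] at h'
      rcases (Nat.Prime.dvd_mul hpp).mp h' with h'' | h''
      · exact hpl ((Nat.prime_dvd_prime_iff_eq hpp hlp).mp h'')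
      · have : p ∣ 4 * t.natAbs * ℓ := Dvd.dvd.mul_right (Dvd.dvd.mul_left h'' 4) ℓ
        have := hpc.eq_one_of_dvd this
        have := hpp.two_le
        omega
    have ha₁odd : Odd a₁ := by
      rw [Nat.odd_iff]
      by_contra hh
      have h2a : 2 ∣ a₁ := by omega
      have h2M : 2 ∣ 4 * t.natAbs := ⟨2 * t.natAbs, by ring⟩
      have := Nat.le_of_dvd (by omega) (Nat.dvd_gcd h2a h2M)
      rw [ha₁c] at this
      omega
    have hps : legendreSym p δ = 1 := by
      rw [jacobiSym.legendreSym.to_jacobiSym, hst, jacobiSym.mul_left]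
      have hJt : jacobiSym t p = -1 := by
        rw [jacobiSym.mod_right t hpodd, show p % (4 * t.natAbs) = a₁ % (4 * t.natAbs) from hp1,
          ← jacobiSym.mod_right t ha₁odd]
        exact ha₁j
      have hJsl : jacobiSym (s * ℓ) p = legendreSym ℓ p := recip_star ℓ hodd p hp2
      rw [hJt, hJsl, hple]
      norm_num
    have := hN p hpN hpl hpd hps
    omega
  refine ⟨fun h4 => ?_, fun h4 => ?_⟩
  · rw [hδs, hs, if_pos h4, one_mul]
  · rw [hδs, hs, if_neg (by omega)]; ring
end

section
/- Presentation and order of the modular maximal-cyclic group inside GL₂(𝔽₅) (Section 7). Let a be the element of GL₂(ℤ/5ℤ) with matrix !![0, 1; 2, 0] and b the element with matrix !![4, 0; 0, 1] (both are invertible, having determinants 3 and 4 respectively). Then: a has order 8, b has order 2, b·a·b = a⁵, and the subgroup of GL₂(ℤ/5ℤ) generated by {a, b} has exactly 16 elements. -/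
set_option maxRecDepth 8000

open Matrix

def g00 : GL (Fin 2) (ZMod 5) := ⟨!![1, 0; 0, 1], !![1, 0; 0, 1], by decide, by decide⟩
def g01 : GL (Fin 2) (ZMod 5) := ⟨!![4, 0; 0, 1], !![4, 0; 0, 1], by decide, by decide⟩
def g10 : GL (Fin 2) (ZMod 5) := ⟨!![0, 1; 2, 0], !![0, 3; 1, 0], by decide, by decide⟩
def g11 : GL (Fin 2) (ZMod 5) := ⟨!![0, 1; 3, 0], !![0, 2; 1, 0], by decide, by decide⟩
def g20 : GL (Fin 2) (ZMod 5) := ⟨!![2, 0; 0, 2], !![3, 0; 0, 3], by decide, by decide⟩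
def g21 : GL (Fin 2) (ZMod 5) := ⟨!![3, 0; 0, 2], !![2, 0; 0, 3], by decide, by decide⟩
def g30 : GL (Fin 2) (ZMod 5) := ⟨!![0, 2; 4, 0], !![0, 4; 3, 0], by decide, by decide⟩
def g31 : GL (Fin 2) (ZMod 5) := ⟨!![0, 2; 1, 0], !![0, 1; 3, 0], by decide, by decide⟩
def g40 : GL (Fin 2) (ZMod 5) := ⟨!![4, 0; 0, 4], !![4, 0; 0, 4], by decide, by decide⟩
def g41 : GL (Fin 2) (ZMod 5) := ⟨!![1, 0; 0, 4], !![1, 0; 0, 4], by decide, by decide⟩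
def g50 : GL (Fin 2) (ZMod 5) := ⟨!![0, 4; 3, 0], !![0, 2; 4, 0], by decide, by decide⟩
def g51 : GL (Fin 2) (ZMod 5) := ⟨!![0, 4; 2, 0], !![0, 3; 4, 0], by decide, by decide⟩
def g60 : GL (Fin 2) (ZMod 5) := ⟨!![3, 0; 0, 3], !![2, 0; 0, 2], by decide, by decide⟩
def g61 : GL (Fin 2) (ZMod 5) := ⟨!![2, 0; 0, 3], !![3, 0; 0, 2], by decide, by decide⟩
def g70 : GL (Fin 2) (ZMod 5) := ⟨!![0, 3; 1, 0], !![0, 1; 2, 0], by decide, by decide⟩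
def g71 : GL (Fin 2) (ZMod 5) := ⟨!![0, 3; 4, 0], !![0, 4; 2, 0], by decide, by decide⟩

def Tset : Finset (GL (Fin 2) (ZMod 5)) := {g00, g01, g10, g11, g20, g21, g30, g31, g40, g41, g50, g51, g60, g61, g70, g71}


section Abstract
variable {G : Type*} [Group G] (x y : G)

theorem swap_pow (hc : y * x = x ^ 5 * y) : ∀ k : ℕ, y * x ^ k = x ^ (5 * k) * y := by
  intro k
  induction k with
  | zero => simp
  | succ k ih =>
    rw [pow_succ, ← mul_assoc, ih, mul_assoc, hc, ← mul_assoc, ← pow_add]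
    ring_nf

theorem swap_pow_pow (hc : y * x = x ^ 5 * y) : ∀ j k : ℕ, y ^ j * x ^ k = x ^ (5 ^ j * k) * y ^ j := by
  intro j
  induction j with
  | zero => simp
  | succ j ih =>
    intro k
    rw [pow_succ, mul_assoc, swap_pow x y hc, ← mul_assoc, ih, mul_assoc, ← pow_succ]
    congr 1
    rw [pow_succ]
    ring_nf

end Abstract

def Sgrp : Subgroup (GL (Fin 2) (ZMod 5)) where
  carrier := {z | ∃ i j : ℕ, z = g10 ^ i * g01 ^ j}
  one_mem' := ⟨0, 0, by simp⟩
  mul_mem' := by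
    rintro u v ⟨i, j, rfl⟩ ⟨k, l, rfl⟩
    refine ⟨i + 5 ^ j * k, j + l, ?_⟩
    rw [mul_assoc, ← mul_assoc (g01 ^ j), swap_pow_pow g10 g01 (by decide)]
    simp [pow_add, mul_assoc]
  inv_mem' := by
    rintro u ⟨i, j, rfl⟩
    have h8 : g10 ^ 8 = 1 := by decide
    have h2 : g01 ^ 2 = 1 := by decide
    have hxi : (g10 ^ i)⁻¹ = g10 ^ (7 * i) := by
      rw [inv_eq_iff_mul_eq_one, ← pow_add]
      have : i + 7 * i = 8 * i := by ring
      rw [this, pow_mul, h8, one_pow]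
    have hyi : (g01 ^ j)⁻¹ = g01 ^ j := by
      rw [inv_eq_iff_mul_eq_one, ← pow_add, ← two_mul, pow_mul, h2, one_pow]
    refine ⟨5 ^ j * (7 * i), j, ?_⟩
    rw [_root_.mul_inv_rev, hxi, hyi, swap_pow_pow g10 g01 (by decide)]

theorem Sgrp_carrier : (Sgrp : Set (GL (Fin 2) (ZMod 5))) = ↑Tset := by
  ext z
  constructor
  · rintro ⟨i, j, rfl⟩
    have h8 : g10 ^ 8 = 1 := by decide
    have h2 : g01 ^ 2 = 1 := by decide
    have hi : g10 ^ i = g10 ^ (i % 8) := by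
      conv_lhs => rw [← Nat.div_add_mod i 8]
      rw [pow_add, pow_mul, h8, one_pow, one_mul]
    have hj : g01 ^ j = g01 ^ (j % 2) := by
      conv_lhs => rw [← Nat.div_add_mod j 2]
      rw [pow_add, pow_mul, h2, one_pow, one_mul]
    rw [hi, hj]
    have hri : i % 8 < 8 := Nat.mod_lt _ (by norm_num)
    have hrj : j % 2 < 2 := Nat.mod_lt _ (by norm_num)
    set r := i % 8 with hr
    set s := j % 2 with hs
    clear_value r s
    show g10 ^ r * g01 ^ s ∈ (Tset : Set _)
    interval_cases r <;> interval_cases s <;> (simp only [Finset.mem_coe]; decide)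
  · intro hz
    have hz' : z ∈ Tset := hz
    fin_cases hz'
    · exact ⟨0, 0, by decide⟩
    · exact ⟨0, 1, by decide⟩
    · exact ⟨1, 0, by decide⟩
    · exact ⟨1, 1, by decide⟩
    · exact ⟨2, 0, by decide⟩
    · exact ⟨2, 1, by decide⟩
    · exact ⟨3, 0, by decide⟩
    · exact ⟨3, 1, by decide⟩
    · exact ⟨4, 0, by decide⟩
    · exact ⟨4, 1, by decide⟩
    · exact ⟨5, 0, by decide⟩
    · exact ⟨5, 1, by decide⟩
    · exact ⟨6, 0, by decide⟩
    · exact ⟨6, 1, by decide⟩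
    · exact ⟨7, 0, by decide⟩
    · exact ⟨7, 1, by decide⟩

/-- **Presentation and order of the modular maximal-cyclic group `M₄(2)` inside
`GL₂(𝔽₅)`** (Section 7): with `a = !![0,1;2,0]` and `b = !![4,0;0,1]` in
`GL₂(ℤ/5ℤ)`, one has `a⁸ = 1` (order 8), `b² = 1` (order 2), `bab = a⁵`, and the
subgroup generated by `a` and `b` has exactly 16 elements. -/
theorem M4_2_presentation
    (a b : GL (Fin 2) (ZMod 5))
    (ha : (a : Matrix (Fin 2) (Fin 2) (ZMod 5)) = !![0, 1; 2, 0])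
    (hb : (b : Matrix (Fin 2) (Fin 2) (ZMod 5)) = !![4, 0; 0, 1]) :
    orderOf a = 8 ∧ orderOf b = 2 ∧ b * a * b = a ^ 5 ∧
      Nat.card (Subgroup.closure {a, b} : Subgroup (GL (Fin 2) (ZMod 5))) = 16 := by
  have haA : a = g10 := Units.ext ha
  have hbB : b = g01 := Units.ext hb
  subst haA hbB
  refine ⟨?_, ?_, by decide, ?_⟩
  · have := orderOf_eq_prime_pow (x := g10) (p := 2) (n := 2) (by decide) (by decide)
    simpa using this
  · exact orderOf_eq_prime (by decide) (by decide)
  · have hcl : Subgroup.closure {g10, g01} = Sgrp := by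
      apply le_antisymm
      · rw [Subgroup.closure_le]
        rintro z (h | h)
        · exact h ▸ ⟨1, 0, by simp⟩
        · simp only [Set.mem_singleton_iff] at h
          exact h ▸ ⟨0, 1, by simp⟩
      · rintro z ⟨i, j, rfl⟩
        exact mul_mem (pow_mem (Subgroup.subset_closure (by simp)) _)
          (pow_mem (Subgroup.subset_closure (by simp)) _)
    rw [hcl]
    have hcard : Nat.card Sgrp = Tset.card :=
      calc Nat.card Sgrp = Nat.card ↥(↑Tset : Set (GL (Fin 2) (ZMod 5))) :=
            Nat.card_congr (Equiv.setCongr Sgrp_carrier)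
        _ = Tset.card := by rw [Nat.card_coe_set_eq, Set.ncard_coe_finset]
    rw [hcard]
    decide
end

section
/- Uniqueness up to conjugation of the subgroup M₄(2) of GL₂(𝔽₅) (Section 7). Let a, b ∈ GL₂(ℤ/5ℤ) be the elements with matrices !![0, 1; 2, 0] and !![4, 0; 0, 1], and let G be the subgroup of GL₂(ℤ/5ℤ) generated by {a, b}. Then every subgroup H of GL₂(ℤ/5ℤ) that is isomorphic to G as an abstract group (i.e., such that there exists a group isomorphism H ≃ G) is conjugate to G: there exists g ∈ GL₂(ℤ/5ℤ) with H = g G g⁻¹. -/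
open Matrix

namespace M42Aux

abbrev R5 := ZMod 5
abbrev Mat2 := Matrix (Fin 2) (Fin 2) R5
abbrev GL2 := GL (Fin 2) R5

def Pm (m : Mat2) : Mat2 := !![1, m 0 0; 0, m 1 0]
def Pi' (m : Mat2) : Mat2 := (m 1 0)^3 • !![m 1 0, -(m 0 0); 0, 1]
def Cm (α β : R5) : Mat2 := !![α, β; 2*β, α]
def Ci (α β : R5) : Mat2 := (α^2 - 2*β^2)^3 • !![α, -β; -(2*β), α]

set_option maxRecDepth 400000 in
set_option maxHeartbeats 4000000 in
theorem LX : ∀ m : Mat2, m^8 = 1 → m^4 ≠ 1 →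
    (Pm m * Pi' m = 1 ∧ Pi' m * Pm m = 1 ∧
      (Pi' m * m * Pm m = !![0,2;1,0] ∨ Pi' m * m * Pm m = !![0,3;1,0])) := by decide

set_option maxRecDepth 400000 in
set_option maxHeartbeats 4000000 in
theorem LZ : ∀ n : Mat2, n^2 = 1 → n * !![0,1;2,0] = (!![0,1;2,0] : Mat2)^5 * n →
    ∃ α β : R5, Cm α β * Ci α β = 1 ∧ Ci α β * Cm α β = 1 ∧
      Cm α β * !![0,1;2,0] = !![0,1;2,0] * Cm α β ∧
      (Cm α β * n = !![4,0;0,1] * Cm α β ∨ Cm α β * n = !![1,0;0,4] * Cm α β) := by decide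

lemma conj_map_closure (g : GL2) (S : Set GL2) :
    Subgroup.map (MulAut.conj g).toMonoidHom (Subgroup.closure S)
      = Subgroup.closure ((fun t => g * t * g⁻¹) '' S) := by
  have himg : ⇑(MulAut.conj g).toMonoidHom '' S = (fun t => g * t * g⁻¹) '' S := by
    apply Set.image_congr
    intro t _
    simp [MulAut.conj_apply]
  rw [MonoidHom.map_closure, himg]

lemma conj_conj (g h : GL2) (K : Subgroup GL2) :
    Subgroup.map (MulAut.conj g).toMonoidHom
        (Subgroup.map (MulAut.conj h).toMonoidHom K)
      = Subgroup.map (MulAut.conj (g*h)).toMonoidHom K := by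
  rw [Subgroup.map_map]
  congr 1
  ext t
  simp [MulAut.conj_apply, mul_assoc]

lemma conj_one_map (K : Subgroup GL2) :
    Subgroup.map (MulAut.conj (1 : GL2)).toMonoidHom K = K := by
  ext t
  simp [Subgroup.mem_map, MulAut.conj_apply]

end M42Aux

open M42Aux

set_option maxHeartbeats 1000000 in
/-- **Uniqueness up to conjugation of the subgroup `M₄(2)` of `GL₂(𝔽₅)`** (Section 7):
every subgroup of `GL₂(ℤ/5ℤ)` abstractly isomorphic to `G = ⟨a, b⟩` is conjugate
to `G`. -/
theorem M4_2_unique_up_to_conjugation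
    (a b : GL (Fin 2) (ZMod 5))
    (ha : (a : Matrix (Fin 2) (Fin 2) (ZMod 5)) = !![0, 1; 2, 0])
    (hb : (b : Matrix (Fin 2) (Fin 2) (ZMod 5)) = !![4, 0; 0, 1])
    (H : Subgroup (GL (Fin 2) (ZMod 5)))
    (hiso : Nonempty (H ≃* (Subgroup.closure {a, b} : Subgroup (GL (Fin 2) (ZMod 5))))) :
    ∃ g : GL (Fin 2) (ZMod 5),
      H = Subgroup.map (MulAut.conj g).toMonoidHom
        (Subgroup.closure {a, b} : Subgroup (GL (Fin 2) (ZMod 5))) := by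
  obtain ⟨e⟩ := hiso
  set Gs : Subgroup GL2 := Subgroup.closure {a, b} with hGs
  -- basic relations among a, b
  have hA8 : a ^ 8 = 1 := Units.ext (by
    rw [Units.val_pow_eq_pow_val, ha, Units.val_one]; decide)
  have hA4 : a ^ 4 ≠ 1 := fun h => by
    have h' := congrArg Units.val h
    rw [Units.val_pow_eq_pow_val, ha, Units.val_one] at h'
    exact absurd h' (by decide)
  have hB2 : b ^ 2 = 1 := Units.ext (by
    rw [Units.val_pow_eq_pow_val, hb, Units.val_one]; decide)
  have hBA : b * a = a ^ 5 * b := Units.ext (by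
    rw [Units.val_mul, Units.val_mul, Units.val_pow_eq_pow_val, ha, hb]; decide)
  have haG : a ∈ Gs := Subgroup.subset_closure (Set.mem_insert _ _)
  have hbG : b ∈ Gs := Subgroup.subset_closure (Set.mem_insert_of_mem _ rfl)
  set A : Gs := ⟨a, haG⟩ with hAdef
  set B : Gs := ⟨b, hbG⟩ with hBdef
  -- A, B generate Gs
  have hgen : Subgroup.closure {A, B} = (⊤ : Subgroup Gs) := by
    have h1 : ((↑) ⁻¹' ({a, b} : Set GL2) : Set Gs) = {A, B} := by
      ext t
      simp [Set.mem_preimage, Set.mem_insert_iff, Subtype.ext_iff, hAdef, hBdef]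
    rw [← h1]
    exact Subgroup.closure_closure_coe_preimage
  set x' : H := e.symm A with hx'def
  set y' : H := e.symm B with hy'def
  -- the injective composite H →* GL2
  set φ : H →* GL2 := Gs.subtype.comp e.toMonoidHom with hφdef
  have hφinj : Function.Injective φ := Gs.subtype_injective.comp e.injective
  have hφx : φ x' = a := by
    show (↑(e (e.symm A)) : GL2) = a
    rw [MulEquiv.apply_symm_apply]
  have hφy : φ y' = b := by
    show (↑(e (e.symm B)) : GL2) = b
    rw [MulEquiv.apply_symm_apply]
  -- relations among x', y'
  have hx'8 : x' ^ 8 = 1 := hφinj (by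
    rw [_root_.map_pow, hφx, _root_.map_one, hA8])
  have hx'4 : x' ^ 4 ≠ 1 := fun h => hA4 (by
    have h' := congrArg φ h
    rw [_root_.map_pow, hφx, _root_.map_one] at h'
    exact h')
  have hy'2 : y' ^ 2 = 1 := hφinj (by
    rw [_root_.map_pow, hφy, _root_.map_one, hB2])
  have hy'x' : y' * x' = x' ^ 5 * y' := hφinj (by
    rw [_root_.map_mul, _root_.map_mul, _root_.map_pow, hφx, hφy, hBA])
  -- H is generated by x', y'
  have hHtop : Subgroup.closure {x', y'} = (⊤ : Subgroup H) := by
    have h2 := MonoidHom.map_closure e.symm.toMonoidHom {A, B}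
    rw [hgen, Subgroup.map_top_of_surjective _ e.symm.surjective, Set.image_pair] at h2
    exact h2.symm
  set x : GL2 := (x' : GL2) with hxdef
  set y : GL2 := (y' : GL2) with hydef
  have hH : H = Subgroup.closure {x, y} := by
    have h3 := MonoidHom.map_closure H.subtype {x', y'}
    rw [hHtop, ← MonoidHom.range_eq_map, Subgroup.range_subtype, Set.image_pair] at h3
    exact h3
  -- relations among x, y in GL2
  have hx8 : x ^ 8 = 1 := by rw [hxdef]; exact_mod_cast hx'8
  have hx4 : x ^ 4 ≠ 1 := by
    rw [hxdef]
    intro h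
    exact hx'4 (by exact_mod_cast h)
  have hy2 : y ^ 2 = 1 := by rw [hydef]; exact_mod_cast hy'2
  have hyx : y * x = x ^ 5 * y := by rw [hxdef, hydef]; exact_mod_cast hy'x'
  -- matrix-level facts about x
  set m : Mat2 := (x : Mat2) with hmdef
  have hm8 : m ^ 8 = 1 := by
    rw [hmdef, ← Units.val_pow_eq_pow_val, hx8, Units.val_one]
  have hm4 : m ^ 4 ≠ 1 := fun h => hx4 (Units.ext (by
    rw [Units.val_pow_eq_pow_val, Units.val_one]; exact h))
  obtain ⟨hP1, hP2, hC⟩ := LX m hm8 hm4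
  set gP : GL2 := ⟨Pi' m, Pm m, hP2, hP1⟩ with hgPdef
  have hqval : ((gP * x * gP⁻¹ : GL2) : Mat2) = Pi' m * m * Pm m := rfl
  -- first conjugation: bring x to a or a^3
  have step1 : ∃ g₁ : GL2, g₁ * x * g₁⁻¹ = a ∨ g₁ * x * g₁⁻¹ = a ^ 3 := by
    rcases hC with hC | hC
    · refine ⟨(⟨!![1,0;0,2], !![1,0;0,3], by decide, by decide⟩ : GL2) * gP, Or.inl ?_⟩
      have h5 : (⟨!![1,0;0,2], !![1,0;0,3], by decide, by decide⟩ : GL2)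
          * (gP * x * gP⁻¹) * (⟨!![1,0;0,2], !![1,0;0,3], by decide, by decide⟩ : GL2)⁻¹
          = a := Units.ext (by
        show !![1,0;0,2] * ((gP * x * gP⁻¹ : GL2) : Mat2) * !![1,0;0,3] = (a : Mat2)
        rw [hqval, hC, ha]; decide)
      rw [← h5]
      simp [_root_.mul_inv_rev, mul_assoc]
    · refine ⟨(⟨!![1,0;0,4], !![1,0;0,4], by decide, by decide⟩ : GL2) * gP, Or.inr ?_⟩
      have h5 : (⟨!![1,0;0,4], !![1,0;0,4], by decide, by decide⟩ : GL2)
          * (gP * x * gP⁻¹) * (⟨!![1,0;0,4], !![1,0;0,4], by decide, by decide⟩ : GL2)⁻¹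
          = a ^ 3 := Units.ext (by
        show !![1,0;0,4] * ((gP * x * gP⁻¹ : GL2) : Mat2) * !![1,0;0,4]
            = ((a ^ 3 : GL2) : Mat2)
        rw [hqval, hC, Units.val_pow_eq_pow_val, ha]; decide)
      rw [← h5]
      simp [_root_.mul_inv_rev, mul_assoc]
  obtain ⟨g₁, he⟩ := step1
  obtain ⟨z, hzdef⟩ : ∃ z : GL2, z = g₁ * y * g₁⁻¹ := ⟨_, rfl⟩
  have hz2 : z ^ 2 = 1 := by
    rw [hzdef, conj_pow, hy2, mul_one, mul_inv_cancel]
  have hy5 : y * x * y⁻¹ = x ^ 5 := mul_inv_eq_iff_eq_mul.mpr hyx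
  have hzw : z * (g₁ * x * g₁⁻¹) * z⁻¹ = (g₁ * x * g₁⁻¹) ^ 5 := by
    have h7 : z * (g₁ * x * g₁⁻¹) * z⁻¹ = (MulAut.conj g₁) (y * x * y⁻¹) := by
      simp only [hzdef, _root_.map_mul, _root_.map_inv, MulAut.conj_apply]
    rw [h7, hy5, _root_.map_pow, MulAut.conj_apply]
  have e9 : (a ^ 3) ^ 3 = a := by
    rw [← pow_mul, show 3 * 3 = 8 + 1 from rfl, pow_succ, hA8, one_mul]
  have hza5 : z * a * z⁻¹ = a ^ 5 := by
    rcases he with he | he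
    · rw [he] at hzw; exact hzw
    · rw [he] at hzw
      calc z * a * z⁻¹ = z * (a ^ 3) ^ 3 * z⁻¹ := by rw [e9]
        _ = (z * a ^ 3 * z⁻¹) ^ 3 := by rw [conj_pow]
        _ = ((a ^ 3) ^ 5) ^ 3 := by rw [hzw]
        _ = (a ^ 8) ^ 5 * a ^ 5 := by
            rw [← pow_mul, ← pow_mul, ← pow_mul, ← pow_add]
        _ = a ^ 5 := by rw [hA8, one_pow, one_mul]
  have hza : z * a = a ^ 5 * z := mul_inv_eq_iff_eq_mul.mp hza5
  -- matrix-level facts about z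
  set n : Mat2 := (z : Mat2) with hndef
  have hn2 : n ^ 2 = 1 := by
    rw [hndef, ← Units.val_pow_eq_pow_val, hz2, Units.val_one]
  have hnM : n * !![0,1;2,0] = (!![0,1;2,0] : Mat2) ^ 5 * n := by
    have h8 := congrArg Units.val hza
    rw [Units.val_mul, Units.val_mul, Units.val_pow_eq_pow_val, ha] at h8
    exact h8
  obtain ⟨α, β, hc1, hc2, hcM, hcz⟩ := LZ n hn2 hnM
  set c : GL2 := ⟨Cm α β, Ci α β, hc1, hc2⟩ with hcdef
  have hcac : c * a * c⁻¹ = a := Units.ext (by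
    show Cm α β * (a : Mat2) * Ci α β = (a : Mat2)
    rw [ha, hcM, mul_assoc, hc1, mul_one])
  have hczc : c * z * c⁻¹ = b ∨ c * z * c⁻¹ = a ^ 4 * b := by
    rcases hcz with hcz | hcz
    · exact Or.inl (Units.ext (by
        show Cm α β * n * Ci α β = (b : Mat2)
        rw [hcz, mul_assoc, hc1, mul_one, hb]))
    · exact Or.inr (Units.ext (by
        show Cm α β * n * Ci α β = ((a ^ 4 * b : GL2) : Mat2)
        rw [hcz, mul_assoc, hc1, mul_one, Units.val_mul,
          Units.val_pow_eq_pow_val, ha, hb]; decide))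
  -- assemble the conjugations
  have hmap1 : Subgroup.map (MulAut.conj g₁).toMonoidHom H
      = Subgroup.closure {a, z} := by
    rw [hH, conj_map_closure, Set.image_pair, ← hzdef]
    rcases he with he | he
    · rw [he]
    · rw [he]
      apply le_antisymm
      · rw [Subgroup.closure_le]
        rintro t (ht | ht)
        · rw [ht]
          exact Subgroup.pow_mem _ (Subgroup.subset_closure (Set.mem_insert _ _)) 3
        · rw [ht]
          exact Subgroup.subset_closure (Set.mem_insert_of_mem _ rfl)
      · rw [Subgroup.closure_le]
        rintro t (ht | ht)
        · have h9 : (a ^ 3) ^ 3 ∈ Subgroup.closure ({a ^ 3, z} : Set GL2) :=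
            Subgroup.pow_mem _ (Subgroup.subset_closure (Set.mem_insert _ _)) 3
          rw [e9] at h9
          rw [ht]
          exact h9
        · rw [ht]
          exact Subgroup.subset_closure (Set.mem_insert_of_mem _ rfl)
  have hmap2 : Subgroup.map (MulAut.conj c).toMonoidHom (Subgroup.closure {a, z})
      = Gs := by
    rw [conj_map_closure, Set.image_pair, hcac]
    rcases hczc with hc' | hc'
    · rw [hc']
    · rw [hc', hGs]
      apply le_antisymm
      · rw [Subgroup.closure_le]
        rintro t (ht | ht)
        · rw [ht]
          exact Subgroup.subset_closure (Set.mem_insert _ _)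
        · rw [ht]
          exact Subgroup.mul_mem _
            (Subgroup.pow_mem _ (Subgroup.subset_closure (Set.mem_insert _ _)) 4)
            (Subgroup.subset_closure (Set.mem_insert_of_mem _ rfl))
      · rw [Subgroup.closure_le]
        rintro t (ht | ht)
        · rw [ht]
          exact Subgroup.subset_closure (Set.mem_insert _ _)
        · have h9 : (a ^ 4)⁻¹ * (a ^ 4 * b)
              ∈ Subgroup.closure ({a, a ^ 4 * b} : Set GL2) :=
            Subgroup.mul_mem _
              (Subgroup.inv_mem _
                (Subgroup.pow_mem _ (Subgroup.subset_closure (Set.mem_insert _ _)) 4))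
              (Subgroup.subset_closure (Set.mem_insert_of_mem _ rfl))
          rw [inv_mul_cancel_left] at h9
          rw [ht]
          exact h9
  have htot : Subgroup.map (MulAut.conj (c * g₁)).toMonoidHom H = Gs := by
    rw [← conj_conj, hmap1, hmap2]
  refine ⟨(c * g₁)⁻¹, ?_⟩
  rw [← htot, conj_conj, inv_mul_cancel, conj_one_map]
end

section
/- Proportion of trace-zero elements (Remark 7.5). Let a, b ∈ GL₂(ℤ/5ℤ) be the elements with matrices !![0, 1; 2, 0] and !![4, 0; 0, 1], and let G be the subgroup of GL₂(ℤ/5ℤ) generated by {a, b} (a group of order 16). Then the number of elements x ∈ G whose underlying matrix has trace 0 in ℤ/5ℤ is exactly 12; equivalently, the proportion of trace-zero elements of G is 3/4. -/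
open Matrix

private abbrev Amat : Matrix (Fin 2) (Fin 2) (ZMod 5) := !![0, 1; 2, 0]
private abbrev Bmat : Matrix (Fin 2) (Fin 2) (ZMod 5) := !![4, 0; 0, 1]

private def Pword (m : Matrix (Fin 2) (Fin 2) (ZMod 5)) : Prop :=
  ∃ i < 8, ∃ j < 2, m = Amat ^ i * Bmat ^ j

private instance : DecidablePred Pword := fun m => by unfold Pword; infer_instance

private lemma pmul : ∀ i < 8, ∀ j < 2, ∀ i' < 8, ∀ j' < 2,
    Pword ((Amat ^ i * Bmat ^ j) * (Amat ^ i' * Bmat ^ j')) := by decide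

private lemma pinv : ∀ i < 8, ∀ j < 2, ∃ i' < 8, ∃ j' < 2,
    (Amat ^ i * Bmat ^ j) * (Amat ^ i' * Bmat ^ j') = 1 := by decide

private lemma pinj : ∀ p q : Fin 8 × Fin 2,
    Amat ^ (p.1 : ℕ) * Bmat ^ (p.2 : ℕ) = Amat ^ (q.1 : ℕ) * Bmat ^ (q.2 : ℕ) → p = q := by
  decide

/-- **Proportion of trace-zero elements** (Remark 7.5): in the subgroup
`G = ⟨a, b⟩ ≅ M₄(2)` of `GL₂(ℤ/5ℤ)` of order 16, exactly 12 elements have trace 0;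
equivalently, the proportion of trace-zero elements is 3/4. -/
theorem M4_2_trace_zero_count
    (a b : GL (Fin 2) (ZMod 5))
    (ha : (a : Matrix (Fin 2) (Fin 2) (ZMod 5)) = !![0, 1; 2, 0])
    (hb : (b : Matrix (Fin 2) (Fin 2) (ZMod 5)) = !![4, 0; 0, 1]) :
    Nat.card {x : GL (Fin 2) (ZMod 5) // x ∈ Subgroup.closure {a, b} ∧
        Matrix.trace (x : Matrix (Fin 2) (Fin 2) (ZMod 5)) = 0} = 12 ∧
      4 * Nat.card {x : GL (Fin 2) (ZMod 5) // x ∈ Subgroup.closure {a, b} ∧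
        Matrix.trace (x : Matrix (Fin 2) (Fin 2) (ZMod 5)) = 0}
        = 3 * Nat.card (Subgroup.closure {a, b} : Subgroup (GL (Fin 2) (ZMod 5))) := by
  classical
  set G := Subgroup.closure ({a, b} : Set (GL (Fin 2) (ZMod 5))) with hGdef
  have haG : a ∈ G := Subgroup.subset_closure (by simp)
  have hbG : b ∈ G := Subgroup.subset_closure (by simp)
  have hpow : ∀ i j : ℕ, ((a ^ i * b ^ j : GL (Fin 2) (ZMod 5)) :
      Matrix (Fin 2) (Fin 2) (ZMod 5)) = Amat ^ i * Bmat ^ j := by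
    intro i j
    simp [Units.val_mul, Units.val_pow_eq_pow_val, ha, hb]
  have hmem : ∀ i j : ℕ, a ^ i * b ^ j ∈ G := fun i j =>
    mul_mem (pow_mem haG i) (pow_mem hbG j)
  let H : Subgroup (GL (Fin 2) (ZMod 5)) :=
    { carrier := {x | Pword (x : Matrix (Fin 2) (Fin 2) (ZMod 5))}
      one_mem' := ⟨0, by norm_num, 0, by norm_num, by simp⟩
      mul_mem' := by
        rintro x y ⟨i, hi, j, hj, hx⟩ ⟨i', hi', j', hj', hy⟩
        show Pword _
        rw [Units.val_mul, hx, hy]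
        exact pmul i hi j hj i' hi' j' hj'
      inv_mem' := by
        rintro x ⟨i, hi, j, hj, hx⟩
        obtain ⟨i', hi', j', hj', h1⟩ := pinv i hi j hj
        refine ⟨i', hi', j', hj', ?_⟩
        have hx1 : (x : Matrix (Fin 2) (Fin 2) (ZMod 5)) * (Amat ^ i' * Bmat ^ j') = 1 := by
          rw [hx]; exact h1
        calc (↑x⁻¹ : Matrix (Fin 2) (Fin 2) (ZMod 5))
            = ↑x⁻¹ * ((x : Matrix (Fin 2) (Fin 2) (ZMod 5)) * (Amat ^ i' * Bmat ^ j')) := by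
              rw [hx1, mul_one]
          _ = (↑x⁻¹ * (x : Matrix (Fin 2) (Fin 2) (ZMod 5))) * (Amat ^ i' * Bmat ^ j') := by
              rw [mul_assoc]
          _ = Amat ^ i' * Bmat ^ j' := by
              rw [← Units.val_mul, inv_mul_cancel, Units.val_one, one_mul] }
  have hGH : ∀ x : GL (Fin 2) (ZMod 5), x ∈ G ↔ ∃ i < 8, ∃ j < 2, x = a ^ i * b ^ j := by
    intro x
    constructor
    · intro hx
      have hP : Pword (x : Matrix (Fin 2) (Fin 2) (ZMod 5)) := by
        refine (Subgroup.closure_le H).2 ?_ hx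
        rintro y (rfl | rfl)
        · exact ⟨1, by norm_num, 0, by norm_num, by simp [ha]⟩
        · exact ⟨0, by norm_num, 1, by norm_num, by simp [hb]⟩
      obtain ⟨i, hi, j, hj, hx'⟩ := hP
      exact ⟨i, hi, j, hj, Units.ext (by rw [hx', hpow])⟩
    · rintro ⟨i, _, j, _, rfl⟩
      exact hmem i j
  -- counting the trace-zero elements
  have hcard1 : Nat.card {p : Fin 8 × Fin 2 //
        Matrix.trace (Amat ^ (p.1 : ℕ) * Bmat ^ (p.2 : ℕ)) = 0}
      = Nat.card {x : GL (Fin 2) (ZMod 5) // x ∈ G ∧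
        Matrix.trace (x : Matrix (Fin 2) (Fin 2) (ZMod 5)) = 0} := by
    refine Nat.card_eq_of_bijective
      (fun p => ⟨a ^ (p.1.1 : ℕ) * b ^ (p.1.2 : ℕ), hmem _ _, by rw [hpow]; exact p.2⟩) ?_
    constructor
    · rintro ⟨p, hp⟩ ⟨q, hq⟩ h
      have h' : (a ^ (p.1 : ℕ) * b ^ (p.2 : ℕ) : GL (Fin 2) (ZMod 5))
          = a ^ (q.1 : ℕ) * b ^ (q.2 : ℕ) := congrArg Subtype.val h
      have h'' : Amat ^ (p.1 : ℕ) * Bmat ^ (p.2 : ℕ) = Amat ^ (q.1 : ℕ) * Bmat ^ (q.2 : ℕ) := by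
        rw [← hpow, ← hpow, h']
      exact Subtype.ext (pinj p q h'')
    · rintro ⟨x, hxG, hxt⟩
      obtain ⟨i, hi, j, hj, rfl⟩ := (hGH x).1 hxG
      refine ⟨⟨(⟨i, hi⟩, ⟨j, hj⟩), ?_⟩, rfl⟩
      rw [← hpow]; exact hxt
  have hcard2 : Nat.card (Fin 8 × Fin 2) = Nat.card G := by
    refine Nat.card_eq_of_bijective
      (fun p => ⟨a ^ (p.1 : ℕ) * b ^ (p.2 : ℕ), hmem _ _⟩) ?_
    constructor
    · intro p q h
      have h' : (a ^ (p.1 : ℕ) * b ^ (p.2 : ℕ) : GL (Fin 2) (ZMod 5))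
          = a ^ (q.1 : ℕ) * b ^ (q.2 : ℕ) := congrArg Subtype.val h
      have h'' : Amat ^ (p.1 : ℕ) * Bmat ^ (p.2 : ℕ) = Amat ^ (q.1 : ℕ) * Bmat ^ (q.2 : ℕ) := by
        rw [← hpow, ← hpow, h']
      exact pinj p q h''
    · rintro ⟨x, hxG⟩
      obtain ⟨i, hi, j, hj, rfl⟩ := (hGH x).1 hxG
      exact ⟨(⟨i, hi⟩, ⟨j, hj⟩), rfl⟩
  have h12 : Nat.card {p : Fin 8 × Fin 2 //
      Matrix.trace (Amat ^ (p.1 : ℕ) * Bmat ^ (p.2 : ℕ)) = 0} = 12 := by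
    rw [Nat.card_eq_fintype_card]
    decide
  have h16 : Nat.card (Fin 8 × Fin 2) = 16 := by simp
  constructor
  · rw [← hcard1, h12]
  · rw [← hcard1, ← hcard2, h12, h16]
end

section
/- Non-normal subgroups of M₄(2) inside GL₂(𝔽₅) (subgroup lattice description in Section 7). Let a, b ∈ GL₂(ℤ/5ℤ) be the elements with matrices !![0, 1; 2, 0] and !![4, 0; 0, 1], let G be the subgroup of GL₂(ℤ/5ℤ) generated by {a, b}, and let â, b̂ denote a and b regarded as elements of the group G. Then the subgroups ⟨b̂⟩ and ⟨â⁴·b̂⟩ of G are distinct and conjugate in G, and a subgroup S of G fails to be normal in G if and only if S = ⟨b̂⟩ or S = ⟨â⁴·b̂⟩; in particular these are the only non-normal subgroups of G. -/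
open Matrix

private lemma powmod {M : Type*} [Monoid M] (u : M) (m : ℕ) (hm : u ^ m = 1) (n : ℕ) :
    u ^ n = u ^ (n % m) := by
  conv_lhs => rw [← Nat.div_add_mod n m]
  rw [pow_add, pow_mul, hm, one_pow, one_mul]

private lemma mem_zpowers_sq {H : Type*} [Group H] {x y : H} (hx : x * x = 1)
    (hy : y ∈ Subgroup.zpowers x) : y = 1 ∨ y = x := by
  obtain ⟨n, rfl⟩ := hy
  show x ^ n = 1 ∨ x ^ n = x
  have h2 : x ^ (2 : ℤ) = 1 := by rw [zpow_two]; exact hx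
  have hn : x ^ n = x ^ (2 * (n / 2) + n % 2) := by rw [Int.mul_ediv_add_emod]
  rw [hn, _root_.zpow_add, _root_.zpow_mul, h2, _root_.one_zpow, one_mul]
  have : n % 2 = 0 ∨ n % 2 = 1 := by omega
  rcases this with h | h <;> rw [h] <;> simp

set_option maxHeartbeats 3200000 in
/-- **Non-normal subgroups of `M₄(2)` inside `GL₂(𝔽₅)`** (subgroup lattice description
in Section 7): in `G = ⟨a, b⟩`, the cyclic subgroups `⟨b'⟩` and `⟨a'⁴·b'⟩` are distinct
and conjugate, and they are exactly the non-normal subgroups of `G`. -/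
theorem M4_2_non_normal_subgroups
    (a b : GL (Fin 2) (ZMod 5))
    (ha : (a : Matrix (Fin 2) (Fin 2) (ZMod 5)) = !![0, 1; 2, 0])
    (hb : (b : Matrix (Fin 2) (Fin 2) (ZMod 5)) = !![4, 0; 0, 1])
    (G : Subgroup (GL (Fin 2) (ZMod 5))) (hG : G = Subgroup.closure {a, b})
    (a' b' : G)
    (ha' : (a' : GL (Fin 2) (ZMod 5)) = a) (hb' : (b' : GL (Fin 2) (ZMod 5)) = b) :
    Subgroup.zpowers b' ≠ Subgroup.zpowers (a' ^ 4 * b') ∧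
    (∃ g : G, Subgroup.map (MulAut.conj g).toMonoidHom (Subgroup.zpowers b')
        = Subgroup.zpowers (a' ^ 4 * b')) ∧
    (∀ S : Subgroup G,
      ¬ S.Normal ↔ S = Subgroup.zpowers b' ∨ S = Subgroup.zpowers (a' ^ 4 * b')) := by
  subst hG
  -- basic GL-level facts
  have h8 : a ^ 8 = 1 := by
    refine Units.ext ?_
    simp only [Units.val_mul, Units.val_pow_eq_pow_val, Units.val_one, ha, hb]
    decide
  have h2 : b ^ 2 = 1 := by
    refine Units.ext ?_
    simp only [Units.val_mul, Units.val_pow_eq_pow_val, Units.val_one, ha, hb]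
    decide
  have hba1 : b * a = a ^ 5 * b := by
    refine Units.ext ?_
    simp only [Units.val_mul, Units.val_pow_eq_pow_val, Units.val_one, ha, hb]
    decide
  have hba : ∀ k : ℕ, b * a ^ k = a ^ (5 * k) * b := by
    intro k
    induction k with
    | zero => simp
    | succ n ih =>
      rw [pow_succ, ← mul_assoc, ih, mul_assoc, hba1, ← mul_assoc, ← pow_add,
        show 5 * n + 5 = 5 * (n + 1) by ring]
  have hbj : ∀ j k : ℕ, b ^ j * a ^ k = a ^ (5 ^ j * k) * b ^ j := by
    intro j
    induction j with
    | zero => intro k; simp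
    | succ n ih =>
      intro k
      rw [pow_succ' b, mul_assoc, ih, ← mul_assoc, hba, mul_assoc, ← pow_succ' b,
        show 5 * (5 ^ n * k) = 5 ^ (n + 1) * k by ring]
  -- every element of G has the form a^i * b^j
  have hT : ∀ x : GL (Fin 2) (ZMod 5), x ∈ Subgroup.closure {a, b} →
      ∃ i j : ℕ, x = a ^ i * b ^ j := by
    intro x hx
    induction hx using Subgroup.closure_induction with
    | mem x hx =>
      rw [Set.mem_insert_iff, Set.mem_singleton_iff] at hx
      rcases hx with rfl | rfl
      · exact ⟨1, 0, by simp⟩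
      · exact ⟨0, 1, by simp⟩
    | one => exact ⟨0, 0, by simp⟩
    | mul x y hx hy ihx ihy =>
      obtain ⟨i, j, rfl⟩ := ihx
      obtain ⟨k, l, rfl⟩ := ihy
      refine ⟨i + 5 ^ j * k, j + l, ?_⟩
      have : a ^ i * b ^ j * (a ^ k * b ^ l) = a ^ i * (b ^ j * a ^ k) * b ^ l := by
        simp only [mul_assoc]
      rw [this, hbj, pow_add, pow_add]
      simp only [mul_assoc]
    | inv x hx ihx =>
      obtain ⟨i, j, rfl⟩ := ihx
      refine ⟨5 ^ j * (7 * i), j, ?_⟩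
      have hainv : a⁻¹ = a ^ 7 := by
        refine inv_eq_of_mul_eq_one_right ?_
        rw [← pow_succ']; exact h8
      have hbinv : b⁻¹ = b := by
        refine inv_eq_of_mul_eq_one_right ?_
        rw [← pow_two]; exact h2
      rw [_root_.mul_inv_rev, ← _root_.inv_pow, ← _root_.inv_pow, hbinv, hainv,
        ← pow_mul, hbj]
  -- conjugation formula
  have key : ∀ J L i k : ℕ, J < 2 → L < 2 →
      (a ^ i * b ^ J) * (a ^ k * b ^ L) * (a ^ i * b ^ J)⁻¹
        = (a ^ k * b ^ L) * a ^ (4 * (i * L + J * k)) := by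
    intro J L i k hJ hL
    interval_cases J <;> interval_cases L <;>
      simp only [pow_zero, pow_one, mul_one, one_mul, Nat.mul_one, Nat.one_mul,
        Nat.mul_zero, Nat.zero_mul, Nat.add_zero, Nat.zero_add]
    · -- J = 0, L = 0
      group
    · -- J = 0, L = 1
      rw [mul_inv_eq_iff_eq_mul]
      have e1 : a ^ i * (a ^ k * b) = a ^ (i + k) * b := by
        rw [pow_add]; simp only [mul_assoc]
      have e2 : a ^ k * b * a ^ (4 * i) * a ^ i = a ^ (k + 5 * (4 * i + i)) * b := by
        rw [mul_assoc (a ^ k * b), ← pow_add, mul_assoc, hba, ← mul_assoc, ← pow_add]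
      rw [e1, e2]
      congr 1
      rw [powmod a 8 h8 (i + k), powmod a 8 h8 (k + 5 * (4 * i + i))]
      congr 1
      omega
    · -- J = 1, L = 0
      rw [mul_inv_eq_iff_eq_mul]
      have e1 : a ^ i * b * a ^ k = a ^ (i + 5 * k) * b := by
        rw [mul_assoc, hba, ← mul_assoc, ← pow_add]
      have e2 : a ^ k * a ^ (4 * k) * (a ^ i * b) = a ^ (k + 4 * k + i) * b := by
        rw [← pow_add, ← mul_assoc, ← pow_add]
      rw [e1, e2]
      congr 1
      rw [powmod a 8 h8 (i + 5 * k), powmod a 8 h8 (k + 4 * k + i)]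
      congr 1
      omega
    · -- J = 1, L = 1
      rw [mul_inv_eq_iff_eq_mul]
      have e1 : a ^ i * b * (a ^ k * b) = a ^ (i + 5 * k) * (b * b) := by
        calc a ^ i * b * (a ^ k * b) = a ^ i * (b * a ^ k) * b := by simp only [mul_assoc]
          _ = a ^ i * (a ^ (5 * k) * b) * b := by rw [hba]
          _ = a ^ (i + 5 * k) * (b * b) := by rw [pow_add]; simp only [mul_assoc]
      have e2 : a ^ k * b * a ^ (4 * (i + k)) * (a ^ i * b)
          = a ^ (k + 5 * (4 * (i + k) + i)) * (b * b) := by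
        calc a ^ k * b * a ^ (4 * (i + k)) * (a ^ i * b)
            = a ^ k * (b * a ^ (4 * (i + k) + i)) * b := by
              rw [pow_add]; simp only [mul_assoc]
          _ = a ^ k * (a ^ (5 * (4 * (i + k) + i)) * b) * b := by rw [hba]
          _ = a ^ (k + 5 * (4 * (i + k) + i)) * (b * b) := by
              rw [pow_add]; simp only [mul_assoc]
      rw [e1, e2]
      congr 1
      rw [powmod a 8 h8 (i + 5 * k), powmod a 8 h8 (k + 5 * (4 * (i + k) + i))]
      congr 1
      omega
  -- commutator dichotomy
  have hF2 : ∀ u ∈ Subgroup.closure {a, b}, ∀ v ∈ Subgroup.closure {a, b},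
      u * v * u⁻¹ = v ∨ u * v * u⁻¹ = v * a ^ 4 := by
    intro u hu v hv
    obtain ⟨i, j, rfl⟩ := hT u hu
    obtain ⟨k, l, rfl⟩ := hT v hv
    rw [powmod b 2 h2 j, powmod b 2 h2 l]
    have hJ : j % 2 < 2 := Nat.mod_lt _ (by norm_num)
    have hL : l % 2 < 2 := Nat.mod_lt _ (by norm_num)
    rw [key (j % 2) (l % 2) i k hJ hL]
    set m := i * (l % 2) + j % 2 * k with hm
    rw [powmod a 8 h8 (4 * m)]
    have : 4 * m % 8 = 0 ∨ 4 * m % 8 = 4 := by omega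
    rcases this with h | h <;> rw [h]
    · left; simp
    · right; rfl
  have injG : ∀ u v : ↥(Subgroup.closure {a, b}), (u : GL (Fin 2) (ZMod 5)) = v → u = v :=
    fun u v h => Subtype.ext h
  -- the element w := a'^4 * b'
  have hwGL : ((a' ^ 4 * b' : ↥(Subgroup.closure {a, b})) : GL (Fin 2) (ZMod 5))
      = a ^ 4 * b := by
    push_cast
    rw [ha', hb']
  have hw2 : (a' ^ 4 * b') * (a' ^ 4 * b') = 1 := by
    apply injG
    push_cast
    rw [ha', hb']
    refine Units.ext ?_
    simp only [Units.val_mul, Units.val_pow_eq_pow_val, Units.val_one, ha, hb]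
    decide
  have hb2' : b' * b' = 1 := by
    apply injG
    push_cast
    rw [hb']
    refine Units.ext ?_
    simp only [Units.val_mul, Units.val_pow_eq_pow_val, Units.val_one, ha, hb]
    decide
  -- b' is not 1, not a'^4 * b', and a'^4*b' is not 1
  have hbne1 : b' ≠ 1 := by
    intro h
    have h2m := congrArg
      (fun u : ↥(Subgroup.closure {a, b}) =>
        ((u : GL (Fin 2) (ZMod 5)) : Matrix (Fin 2) (Fin 2) (ZMod 5))) h
    simp only [hb', OneMemClass.coe_one, Units.val_one, ha, hb] at h2m
    exact absurd h2m (by decide)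
  have hbnew : b' ≠ a' ^ 4 * b' := by
    intro h
    have h2m := congrArg
      (fun u : ↥(Subgroup.closure {a, b}) =>
        ((u : GL (Fin 2) (ZMod 5)) : Matrix (Fin 2) (Fin 2) (ZMod 5))) h
    simp only [hwGL, hb', Units.val_mul, Units.val_pow_eq_pow_val, ha, hb] at h2m
    exact absurd h2m (by decide)
  have hwne1 : (a' ^ 4 * b' : ↥(Subgroup.closure {a, b})) ≠ 1 := by
    intro h
    have h2m := congrArg
      (fun u : ↥(Subgroup.closure {a, b}) =>
        ((u : GL (Fin 2) (ZMod 5)) : Matrix (Fin 2) (Fin 2) (ZMod 5))) h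
    simp only [hwGL, OneMemClass.coe_one, Units.val_one, Units.val_mul,
      Units.val_pow_eq_pow_val, ha, hb] at h2m
    exact absurd h2m (by decide)
  have hbnotin : b' ∉ Subgroup.zpowers (a' ^ 4 * b') := by
    intro hmem
    rcases mem_zpowers_sq hw2 hmem with h | h
    · exact hbne1 h
    · exact hbnew h
  -- conjugation of b' and of a'^4 * b' by a'
  have hconjb : a' * b' * a'⁻¹ = a' ^ 4 * b' := by
    apply injG
    push_cast
    rw [ha', hb', mul_inv_eq_iff_eq_mul]
    refine Units.ext ?_
    simp only [Units.val_mul, Units.val_pow_eq_pow_val, Units.val_one, ha, hb]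
    decide
  have hconjw : a' * (a' ^ 4 * b') * a'⁻¹ = b' := by
    apply injG
    push_cast
    rw [ha', hb', mul_inv_eq_iff_eq_mul]
    refine Units.ext ?_
    simp only [Units.val_mul, Units.val_pow_eq_pow_val, Units.val_one, ha, hb]
    decide
  refine ⟨?_, ?_, ?_⟩
  · -- the two subgroups are distinct
    intro heq
    exact hbnotin (heq ▸ Subgroup.mem_zpowers b')
  · -- they are conjugate
    refine ⟨a', ?_⟩
    have h1 : (MulAut.conj a').toMonoidHom b' = a' ^ 4 * b' := by
      simpa [MulAut.conj_apply] using hconjb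
    rw [MonoidHom.map_zpowers, h1]
  · intro S
    constructor
    · -- forward direction
      intro hN
      by_contra hcon
      push_neg at hcon
      obtain ⟨hne1, hne2⟩ := hcon
      apply hN
      by_cases hz : (a' ^ 4 : ↥(Subgroup.closure {a, b})) ∈ S
      · -- a'^4 ∈ S : S is normal
        constructor
        intro n hn g
        have hcoe : ((g * n * g⁻¹ : ↥(Subgroup.closure {a, b})) : GL (Fin 2) (ZMod 5))
            = (g : GL (Fin 2) (ZMod 5)) * n * (g : GL (Fin 2) (ZMod 5))⁻¹ := by
          push_cast; ring
        rcases hF2 (g : GL (Fin 2) (ZMod 5)) g.2 (n : GL (Fin 2) (ZMod 5)) n.2 with h | h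
        · have heq2 : g * n * g⁻¹ = n := injG _ _ (by rw [hcoe]; exact h)
          rw [heq2]; exact hn
        · have heq2 : g * n * g⁻¹ = n * a' ^ 4 := by
            apply injG
            rw [hcoe]
            push_cast
            rw [ha']
            exact h
          rw [heq2]
          exact S.mul_mem hn hz
      · -- a'^4 ∉ S : S ⊆ {1, b', a'^4 * b'}
        have hzS : ∀ x : ↥(Subgroup.closure {a, b}), x ∈ S → ∀ p : ℕ,
            ((x : GL (Fin 2) (ZMod 5))) ^ p = a ^ 4 → False := by
          intro x hx p hp
          apply hz
          have hxp : x ^ p = a' ^ 4 := by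
            apply injG
            push_cast
            rw [ha']
            exact hp
          exact hxp ▸ S.pow_mem hx p
        have hclass : ∀ x : ↥(Subgroup.closure {a, b}), x ∈ S →
            x = 1 ∨ x = b' ∨ x = a' ^ 4 * b' := by
          intro x hx
          obtain ⟨i, j, hxGL⟩ := hT (x : GL (Fin 2) (ZMod 5)) x.2
          rw [powmod a 8 h8 i, powmod b 2 h2 j] at hxGL
          have hi : i % 8 < 8 := Nat.mod_lt _ (by norm_num)
          have hj : j % 2 < 2 := Nat.mod_lt _ (by norm_num)
          generalize hq1 : i % 8 = i' at hxGL hi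
          generalize hq2 : j % 2 = j' at hxGL hj
          interval_cases i' <;> interval_cases j'
          · -- (0,0) : x = 1
            left
            apply injG
            rw [hxGL]
            push_cast
            refine Units.ext ?_
            simp only [Units.val_mul, Units.val_pow_eq_pow_val, Units.val_one, ha, hb]
            decide
          · -- (0,1) : x = b'
            right; left
            apply injG
            rw [hxGL, hb']
            refine Units.ext ?_
            simp only [Units.val_mul, Units.val_pow_eq_pow_val, Units.val_one, ha, hb]
            decide
          all_goals first
          | (right; right
             apply injG
             rw [hxGL, hwGL]
             refine Units.ext ?_
             simp only [Units.val_mul, Units.val_pow_eq_pow_val, Units.val_one, ha, hb]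
             decide)
          | exact (hzS x hx 1 (by
              rw [hxGL]
              refine Units.ext ?_
              simp only [Units.val_mul, Units.val_pow_eq_pow_val, Units.val_one, ha, hb]
              decide)).elim
          | exact (hzS x hx 2 (by
              rw [hxGL]
              refine Units.ext ?_
              simp only [Units.val_mul, Units.val_pow_eq_pow_val, Units.val_one, ha, hb]
              decide)).elim
          | exact (hzS x hx 4 (by
              rw [hxGL]
              refine Units.ext ?_
              simp only [Units.val_mul, Units.val_pow_eq_pow_val, Units.val_one, ha, hb]
              decide)).elim
        by_cases hbS : b' ∈ S
        · by_cases hwS : (a' ^ 4 * b' : ↥(Subgroup.closure {a, b})) ∈ S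
          · exfalso
            apply hz
            have hzbw : (a' ^ 4 : ↥(Subgroup.closure {a, b})) = b' * (a' ^ 4 * b') := by
              apply injG
              push_cast
              rw [ha', hb']
              refine Units.ext ?_
              simp only [Units.val_mul, Units.val_pow_eq_pow_val, Units.val_one, ha, hb]
              decide
            rw [hzbw]
            exact S.mul_mem hbS hwS
          · exfalso
            apply hne1
            ext x
            constructor
            · intro hx
              rcases hclass x hx with rfl | rfl | rfl
              · exact Subgroup.one_mem _
              · exact Subgroup.mem_zpowers _
              · exact absurd hx hwS
            · intro hx
              rcases mem_zpowers_sq hb2' hx with rfl | rfl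
              · exact S.one_mem
              · exact hbS
        · by_cases hwS : (a' ^ 4 * b' : ↥(Subgroup.closure {a, b})) ∈ S
          · exfalso
            apply hne2
            ext x
            constructor
            · intro hx
              rcases hclass x hx with rfl | rfl | rfl
              · exact Subgroup.one_mem _
              · exact absurd hx hbS
              · exact Subgroup.mem_zpowers _
            · intro hx
              rcases mem_zpowers_sq hw2 hx with rfl | rfl
              · exact S.one_mem
              · exact hwS
          · constructor
            intro n hn g
            rcases hclass n hn with rfl | rfl | rfl
            · simpa using S.one_mem
            · exact absurd hn hbS
            · exact absurd hn hwS
    · -- reverse direction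
      rintro (rfl | rfl) hN
      · have hc := hN.conj_mem b' (Subgroup.mem_zpowers b') a'
        rw [hconjb] at hc
        rcases mem_zpowers_sq hb2' hc with h | h
        · exact hwne1 h
        · exact hbnew h.symm
      · have hc := hN.conj_mem (a' ^ 4 * b') (Subgroup.mem_zpowers _) a'
        rw [hconjw] at hc
        exact hbnotin hc
end

section
/- Invariance of the forgetful map j of X_G(5) under t ↦ 5/t (identity observed in the proof of Proposition 7.6). Define, for t ∈ ℚ, J(t) = 5⁴·t³·(t² + 5t + 10)³·(2t² + 5t + 5)³·(4t⁴ + 30t³ + 95t² + 150t + 100)³ / ((t² + 5t + 5)⁵·(t⁴ + 5t³ + 15t² + 25t + 25)⁵). Then for every nonzero rational number t, the denominators (t² + 5t + 5) and (t⁴ + 5t³ + 15t² + 25t + 25) are nonzero (these polynomials have no rational roots), and J(t) = J(5/t). -/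
/-- The explicit rational function expressing the forgetful map
`j : X_G(5) → X(1)` in terms of Zywina's Hauptmodul `t` of `X_G(5)`. -/
def Jmap (t : ℚ) : ℚ :=
  5 ^ 4 * t ^ 3 * (t ^ 2 + 5 * t + 10) ^ 3 * (2 * t ^ 2 + 5 * t + 5) ^ 3 *
      (4 * t ^ 4 + 30 * t ^ 3 + 95 * t ^ 2 + 150 * t + 100) ^ 3 /
    ((t ^ 2 + 5 * t + 5) ^ 5 * (t ^ 4 + 5 * t ^ 3 + 15 * t ^ 2 + 25 * t + 25) ^ 5)

lemma quad_ne (t : ℚ) : t ^ 2 + 5 * t + 5 ≠ 0 := by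
  intro h
  have h5 : ((2 * t + 5 : ℚ) : ℝ) ^ 2 = 5 := by
    have : (2 * t + 5 : ℚ) ^ 2 = 5 := by nlinarith [h]
    exact_mod_cast congrArg (fun x : ℚ => (x : ℝ)) this
  have hirr : Irrational (Real.sqrt 5) := by
    exact_mod_cast (Nat.Prime.irrational_sqrt (by norm_num : Nat.Prime 5))
  have heq : Real.sqrt 5 = |((2 * t + 5 : ℚ) : ℝ)| := by
    rw [← h5, Real.sqrt_sq_eq_abs]
  rw [heq] at hirr
  have : |((2 * t + 5 : ℚ) : ℝ)| = ((|2 * t + 5| : ℚ) : ℝ) := by push_cast; ring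
  rw [this] at hirr
  exact hirr ⟨_, rfl⟩

lemma quart_pos (t : ℚ) : 0 < t ^ 4 + 5 * t ^ 3 + 15 * t ^ 2 + 25 * t + 25 := by
  nlinarith [sq_nonneg (t ^ 2 + 5 * t / 2), sq_nonneg (t + 10 / 7)]

/-- **Invariance of the forgetful map `j` of `X_G(5)` under `t ↦ 5/t`** (identity
observed in the proof of Proposition 7.6): for every nonzero rational `t`, the
denominators are nonzero and `J(t) = J(5/t)`. -/
theorem Jmap_invariance (t : ℚ) (ht : t ≠ 0) :
    t ^ 2 + 5 * t + 5 ≠ 0 ∧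
    t ^ 4 + 5 * t ^ 3 + 15 * t ^ 2 + 25 * t + 25 ≠ 0 ∧
    Jmap t = Jmap (5 / t) := by
  refine ⟨quad_ne t, (quart_pos t).ne', ?_⟩
  have h1 := quad_ne t
  have h2 := (quart_pos t).ne'
  have h3 := quad_ne (5 / t)
  have h4 := (quart_pos (5 / t)).ne'
  simp only [Jmap]
  rw [div_eq_div_iff (by positivity) (by positivity)]
  field_simp
  ring
end
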